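/- Let a < 0 be a real number, let X > 1 be a real number, and let n be a positive integer. Then ∫_{−log X}^{0} e^{(1−a)x} · [∑_{l=1}^{n} binom(n, l) (1 − 2a)^{l} x^{l−1}/(l−1)!] dx = 1 − (1 + (2a − 1)/(1 − a))^{n} + ∑_{l=1}^{n} binom(n, l) (2a − 1)^{l} X^{a−1} ∑_{k=0}^{l−1} (log X)^{k}/(k! (1 − a)^{l−k}). -/

import Mathlib

/-!
After expanding the sum, the integral is a combination of `∫_{-L}^0 e^{c x} x^m / m! dx` with
`c = 1 - a`, `L = log X`, which repeated integration by parts evaluates in closed form. The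
boundary terms at `0` sum, by the binomial theorem, to `1 - (1 + (2a - 1)/(1 - a))^n`; those at
`-log X` carry the factor `e^{-(1-a) log X} = X^{a-1}`.
-/

open Finset Nat

/-- For `c ≠ 0`, a primitive of `y ↦ exp (c * y) * y ^ m / m!`, from repeated integration by
parts. -/
noncomputable def expMulPowPrimitive (c : ℝ) (m : ℕ) (y : ℝ) : ℝ :=
  (-1) ^ m * Real.exp (c * y) * ∑ k ∈ range (m + 1), (-y) ^ k / (k ! * c ^ (m + 1 - k))

section expMulPowPrimitive

variable {c : ℝ}

lemma expMulPowPrimitive_zero (y : ℝ) : expMulPowPrimitive c 0 y = Real.exp (c * y) / c := by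
  simp [expMulPowPrimitive, div_eq_mul_inv]

lemma expMulPowPrimitive_succ (m : ℕ) (y : ℝ) :
    expMulPowPrimitive c (m + 1) y =
      (Real.exp (c * y) * y ^ (m + 1) / (m + 1)! - expMulPowPrimitive c m y) / c := by
  have hterm : ∀ k ∈ range (m + 1),
      (-y) ^ k / (k ! * c ^ (m + 1 + 1 - k)) = (-y) ^ k / (k ! * c ^ (m + 1 - k)) / c := by
    intro k hk
    rw [show m + 1 + 1 - k = m + 1 - k + 1 by grind, pow_succ]
    ring
  have hsign : (-1 : ℝ) ^ (m + 1) * (-y) ^ (m + 1) = y ^ (m + 1) := by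
    rw [← mul_pow]
    ring
  simp only [expMulPowPrimitive]
  rw [sum_range_succ, sum_congr rfl hterm, ← sum_div, show m + 1 + 1 - (m + 1) = 1 by omega,
    pow_one]
  linear_combination Real.exp (c * y) / ((m + 1)! * c) * hsign

lemma hasDerivAt_expMulPowPrimitive (hc : c ≠ 0) (m : ℕ) (x : ℝ) :
    HasDerivAt (expMulPowPrimitive c m) (Real.exp (c * x) * x ^ m / m !) x := by
  have hexp : HasDerivAt (fun y ↦ Real.exp (c * y)) (Real.exp (c * x) * c) x := by
    simpa using ((hasDerivAt_id x).const_mul c).exp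
  induction m with
  | zero =>
    rw [funext expMulPowPrimitive_zero]
    refine (hexp.div_const c).congr_deriv ?_
    field_simp
    simp
  | succ m ih =>
    rw [funext (expMulPowPrimitive_succ m)]
    refine (((hexp.mul (hasDerivAt_pow (m + 1) x)).div_const _).sub ih).div_const c
      |>.congr_deriv ?_
    rw [Nat.factorial_succ]
    push_cast
    field_simp
    ring

lemma expMulPowPrimitive_apply_zero (m : ℕ) :
    expMulPowPrimitive c m 0 = (-1) ^ m / c ^ (m + 1) := by
  rw [expMulPowPrimitive, sum_eq_single 0 (fun k _ hk ↦ by simp [hk]) (by simp)]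
  simp [div_eq_mul_inv]

lemma integral_exp_mul_mul_pow_div_factorial (hc : c ≠ 0) (m : ℕ) (L : ℝ) :
    ∫ x in (-L)..0, Real.exp (c * x) * x ^ m / m ! =
      (-1) ^ m * (1 / c ^ (m + 1) -
        Real.exp (-(c * L)) * ∑ k ∈ range (m + 1), L ^ k / (k ! * c ^ (m + 1 - k))) := by
  rw [intervalIntegral.integral_eq_sub_of_hasDerivAt
    (fun x _ ↦ hasDerivAt_expMulPowPrimitive hc m x)
    (Continuous.intervalIntegrable (by fun_prop) _ _),
    expMulPowPrimitive_apply_zero, expMulPowPrimitive]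
  simp only [neg_neg, mul_neg]
  ring

end expMulPowPrimitive

lemma sum_Icc_one_choose_mul_pow (n : ℕ) (t : ℝ) :
    ∑ l ∈ Icc 1 n, (n.choose l : ℝ) * t ^ l = (1 + t) ^ n - 1 := by
  rw [add_comm, add_pow, ← Ico_add_one_right_eq_Icc, sum_Ico_eq_sub _ (by omega)]
  simp [mul_comm]

theorem truncated_transform_at_one_general (a : ℝ) (ha : a < 0) (X : ℝ) (hX : 1 < X)
    (n : ℕ) :
    ∫ x in (-Real.log X)..(0 : ℝ), Real.exp ((1 - a) * x) *
        ∑ l ∈ Finset.Icc 1 n, (n.choose l : ℝ) * (1 - 2 * a) ^ l * x ^ (l - 1) /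
          (Nat.factorial (l - 1) : ℝ) =
      1 - (1 + (2 * a - 1) / (1 - a)) ^ n +
        ∑ l ∈ Finset.Icc 1 n, (n.choose l : ℝ) * (2 * a - 1) ^ l * X ^ (a - 1) *
          ∑ k ∈ Finset.range l,
            (Real.log X) ^ k / ((Nat.factorial k : ℝ) * (1 - a) ^ (l - k)) := by
  have hc : 1 - a ≠ 0 := by linarith
  have hXpow : Real.exp (-((1 - a) * Real.log X)) = X ^ (a - 1) := by
    rw [Real.rpow_def_of_pos (by linarith)]
    ring_nf
  have hterm : ∀ l ∈ Icc 1 n,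
      ∫ x in (-Real.log X)..0, Real.exp ((1 - a) * x) *
          ((n.choose l : ℝ) * (1 - 2 * a) ^ l * x ^ (l - 1) / (l - 1)!) =
        -((n.choose l : ℝ) * ((2 * a - 1) / (1 - a)) ^ l) +
          (n.choose l : ℝ) * (2 * a - 1) ^ l * X ^ (a - 1) *
            ∑ k ∈ range l, Real.log X ^ k / (k ! * (1 - a) ^ (l - k)) := by
    intro l hl
    obtain ⟨m, rfl⟩ : ∃ m, l = m + 1 := ⟨l - 1, by grind⟩
    rw [Nat.add_sub_cancel]
    simp_rw [mul_div_assoc, mul_left_comm (Real.exp _), ← mul_div_assoc (Real.exp _)]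
    have hsign : (1 - 2 * a) ^ (m + 1) * (-1) ^ m = -(2 * a - 1) ^ (m + 1) := by
      rw [show 2 * a - 1 = -1 * (1 - 2 * a) by ring, mul_pow]
      ring
    rw [intervalIntegral.integral_const_mul, integral_exp_mul_mul_pow_div_factorial hc, hXpow,
      div_pow]
    linear_combination (n.choose (m + 1) * (1 / (1 - a) ^ (m + 1) - X ^ (a - 1) *
      ∑ k ∈ range (m + 1), Real.log X ^ k / (k ! * (1 - a) ^ (m + 1 - k)))) * hsign
  rw [← intervalIntegral.integral_congr (fun x _ ↦ (mul_sum ..).symm),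
    intervalIntegral.integral_finsetSum
      (fun l _ ↦ Continuous.intervalIntegrable (by fun_prop) _ _), sum_congr rfl hterm,
    sum_add_distrib, sum_neg_distrib, sum_Icc_one_choose_mul_pow]
  ring

/-- Evaluation of the truncated transform `H_{n,X}(1)`. -/
theorem truncated_transform_at_one (a : ℝ) (ha : a < 0) (X : ℝ) (hX : 1 < X)
    (n : ℕ) (hn : 0 < n) :
    ∫ x in (-Real.log X)..(0 : ℝ), Real.exp ((1 - a) * x) *
        ∑ l ∈ Finset.Icc 1 n, (n.choose l : ℝ) * (1 - 2 * a) ^ l * x ^ (l - 1) /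
          (Nat.factorial (l - 1) : ℝ) =
      1 - (1 + (2 * a - 1) / (1 - a)) ^ n +
        ∑ l ∈ Finset.Icc 1 n, (n.choose l : ℝ) * (2 * a - 1) ^ l * X ^ (a - 1) *
          ∑ k ∈ Finset.range l,
            (Real.log X) ^ k / ((Nat.factorial k : ℝ) * (1 - a) ^ (l - k)) :=
  truncated_transform_at_one_general a ha X hX n
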